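/- Let d ≥ 3, κ ≥ 2d. There exists a constant C = C(d,κ) > 0 such that for all measurable α₁, α₂ : ℝ^{2d} → ℂ with ‖α_i‖_{A^{κ,2}} < ∞, the forces F_i(x) := −∫_{ℝ^d} ∇Γ(x−y) ρ_i(y) dy with ρ_i(y) := ∫_{ℝ^d} |α_i(y,w)|² dw satisfy ‖F₁ − F₂‖_{L^∞(ℝ^d)} ≤ C (‖α₁‖_{A^{κ,2}} + ‖α₂‖_{A^{κ,2}}) ‖α₁ − α₂‖_{A^{κ,2}}. -/

import Mathlib

/-!
The `A^{κ,2}` norm controls two things. Its `R = 0` term is the `L²` norm of `α`, and averaging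
its `R = 1` term over a unit ball in `x` bounds every fibre mass `∫ |α(y,w)|² dw` uniformly in `y`.
By the reverse triangle inequality in `L²`,
`|ρ₁ - ρ₂|(y) ≤ (‖α₁(y,·)‖₂ + ‖α₂(y,·)‖₂) ‖(α₁ - α₂)(y,·)‖₂`, so the fibre bound controls
`‖ρ₁ - ρ₂‖_∞` and Cauchy–Schwarz in `y` controls `‖ρ₁ - ρ₂‖₁`, both by
`(‖α₁‖ + ‖α₂‖) ‖α₁ - α₂‖`. Finally `|∇Γ(u)| ≲ |u|^{1-d}` is integrable on the unit ball and
bounded by a constant outside it, so `‖∇Γ * ρ‖_∞ ≲ ‖ρ‖_∞ + ‖ρ‖₁`.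
-/

open MeasureTheory
open scoped ENNReal NNReal

/-- `ℝ^d` as a Euclidean space. -/
abbrev E (d : ℕ) : Type := EuclideanSpace ℝ (Fin d)

/-- The `A^{κ,p}` norm: `sup_{R ≥ 0} (1+R)^{-κ/p} (∫ sup_{|z̄| ≤ R} ‖f(z+z̄)‖^p dz)^{1/p}`. -/
noncomputable def Anorm {G F : Type*} [NormedAddCommGroup G] [MeasureSpace G]
    [NormedAddCommGroup F] (κ p : ℝ) (f : G → F) : ℝ≥0∞ :=
  ⨆ R : NNReal, (ENNReal.ofReal (1 + (R : ℝ))) ^ (-(κ / p)) *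
    (∫⁻ z, ⨆ w ∈ Metric.closedBall (0 : G) (R : ℝ),
      ENNReal.ofReal (‖f (z + w)‖ ^ p)) ^ (1 / p)

/-- The gradient `∇Γ(x) = x / (c_d |x|^d)` of the Newtonian potential on `ℝ^d`,
where `c_d = d·ω_d` is the surface measure of the unit sphere `S^{d-1}`. -/
noncomputable def gradNewton (d : ℕ) (x : E d) : E d :=
  (((d : ℝ) * (volume (Metric.ball (0 : E d) 1)).toReal) * ‖x‖ ^ (d : ℝ))⁻¹ • x

open Metric

section Anorm

variable {G F : Type*} [NormedAddCommGroup G] [MeasureSpace G] [NormedAddCommGroup F]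

lemma lintegral_sup_closedBall_le_Anorm {κ p : ℝ} (hp : 0 < p) (f : G → F) (R : ℝ≥0) :
    ∫⁻ z, ⨆ w ∈ closedBall (0 : G) R, ENNReal.ofReal (‖f (z + w)‖ ^ p) ≤
      ENNReal.ofReal (1 + R) ^ κ * Anorm κ p f ^ p := by
  set c := ENNReal.ofReal (1 + R)
  set I := ∫⁻ z, ⨆ w ∈ closedBall (0 : G) R, ENNReal.ofReal (‖f (z + w)‖ ^ p)
  have hc0 : c ≠ 0 := (ENNReal.ofReal_pos.mpr (by positivity)).ne'
  have hcT : c ≠ ⊤ := ENNReal.ofReal_ne_top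
  have hterm : c ^ (-(κ / p)) * I ^ (1 / p) ≤ Anorm κ p f :=
    le_iSup (fun R : ℝ≥0 => ENNReal.ofReal (1 + R) ^ (-(κ / p)) *
      (∫⁻ z, ⨆ w ∈ closedBall (0 : G) R, ENNReal.ofReal (‖f (z + w)‖ ^ p)) ^ (1 / p)) R
  calc I = (c ^ (κ / p) * (c ^ (-(κ / p)) * I ^ (1 / p))) ^ p := by
        rw [← mul_assoc, ← ENNReal.rpow_add _ _ hc0 hcT, add_neg_cancel, ENNReal.rpow_zero,
          one_mul, ← ENNReal.rpow_mul, one_div_mul_cancel hp.ne', ENNReal.rpow_one]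
    _ ≤ (c ^ (κ / p) * Anorm κ p f) ^ p := by gcongr
    _ = c ^ κ * Anorm κ p f ^ p := by
        rw [ENNReal.mul_rpow_of_nonneg _ _ hp.le, ← ENNReal.rpow_mul, div_mul_cancel₀ _ hp.ne']

lemma eLpNorm'_le_Anorm {κ p : ℝ} (hp : 0 < p) (f : G → F) :
    eLpNorm' f p volume ≤ Anorm κ p f := by
  have h := lintegral_sup_closedBall_le_Anorm (κ := κ) hp f 0
  simp only [NNReal.coe_zero, closedBall_zero, Set.mem_singleton_iff, iSup_iSup_eq_left,
    add_zero, ENNReal.ofReal_one, ENNReal.one_rpow, one_mul] at h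
  rw [eLpNorm']
  calc (∫⁻ z, ‖f z‖ₑ ^ p) ^ (1 / p) = (∫⁻ z, ENNReal.ofReal (‖f z‖ ^ p)) ^ (1 / p) := by
        simp_rw [← ofReal_norm, ENNReal.ofReal_rpow_of_nonneg (norm_nonneg _) hp.le]
    _ ≤ (Anorm κ p f ^ p) ^ (1 / p) := by gcongr
    _ = Anorm κ p f := by rw [← ENNReal.rpow_mul, mul_one_div_cancel hp.ne', ENNReal.rpow_one]

lemma eLpNorm_two_le_Anorm {κ : ℝ} (f : G → F) : eLpNorm f 2 volume ≤ Anorm κ 2 f := by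
  rw [eLpNorm_eq_eLpNorm' two_ne_zero ENNReal.ofNat_ne_top, ENNReal.toReal_ofNat]
  exact eLpNorm'_le_Anorm two_pos f

end Anorm

section AnormSlice

variable {G₁ G₂ F : Type*} [NormedAddCommGroup G₁] [MeasureSpace G₁]
  [NormedAddCommGroup G₂] [MeasureSpace G₂] [SFinite (volume : Measure G₂)]
  [NormedAddCommGroup F] [MeasurableSpace F] [BorelSpace F]

lemma measure_ball_mul_lintegral_slice_le_Anorm [OpensMeasurableSpace G₁] {κ p : ℝ} (hp : 0 < p)
    {f : G₁ × G₂ → F} (hf : Measurable f) (y : G₁) :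
    volume (ball y 1) * ∫⁻ w, ENNReal.ofReal (‖f (y, w)‖ ^ p) ≤ 2 ^ κ * Anorm κ p f ^ p := by
  have hslice : Measurable fun w => ENNReal.ofReal (‖f (y, w)‖ ^ p) :=
    ((hf.comp measurable_prodMk_left).norm.pow_const p).ennreal_ofReal
  have hshift : ∀ z : G₁ × G₂, (ball y 1).indicator 1 z.1 * ENNReal.ofReal (‖f (y, z.2)‖ ^ p) ≤
      ⨆ w ∈ closedBall (0 : G₁ × G₂) 1, ENNReal.ofReal (‖f (z + w)‖ ^ p) := by
    rintro ⟨x, w⟩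
    by_cases hx : x ∈ ball y 1
    · have hmem : ((y - x, 0) : G₁ × G₂) ∈ closedBall 0 1 := by
        simpa [dist_eq_norm, norm_sub_rev] using (mem_ball.mp hx).le
      refine le_trans (le_of_eq ?_) (le_biSup (fun w' => ENNReal.ofReal (‖f ((x, w) + w')‖ ^ p))
        hmem)
      simp [Set.indicator_of_mem hx]
    · simp [Set.indicator_of_notMem hx]
  calc volume (ball y 1) * ∫⁻ w, ENNReal.ofReal (‖f (y, w)‖ ^ p)
      = ∫⁻ z : G₁ × G₂, (ball y 1).indicator 1 z.1 * ENNReal.ofReal (‖f (y, z.2)‖ ^ p) := by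
        rw [Measure.volume_eq_prod, lintegral_prod_mul
          (measurable_one.indicator measurableSet_ball).aemeasurable hslice.aemeasurable,
          lintegral_indicator_one measurableSet_ball]
    _ ≤ ∫⁻ z, ⨆ w ∈ closedBall (0 : G₁ × G₂) 1, ENNReal.ofReal (‖f (z + w)‖ ^ p) :=
        lintegral_mono hshift
    _ ≤ 2 ^ κ * Anorm κ p f ^ p := by
        simpa [one_add_one_eq_two] using lintegral_sup_closedBall_le_Anorm (κ := κ) hp f 1

lemma eLpNorm'_slice_le_Anorm [NormedSpace ℝ G₁] [BorelSpace G₁] [FiniteDimensional ℝ G₁]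
    [(volume : Measure G₁).IsAddHaarMeasure] {κ p : ℝ} (hp : 0 < p) {f : G₁ × G₂ → F}
    (hf : Measurable f) (y : G₁) :
    eLpNorm' (fun w => f (y, w)) p volume ≤
      ((volume (ball (0 : G₁) 1))⁻¹ * 2 ^ κ) ^ (1 / p) * Anorm κ p f := by
  set v := volume (ball (0 : G₁) 1)
  have hv0 : v ≠ 0 := (measure_ball_pos volume _ one_pos).ne'
  have hvT : v ≠ ⊤ := measure_ball_lt_top.ne
  have h := measure_ball_mul_lintegral_slice_le_Anorm (κ := κ) hp hf y
  rw [Measure.addHaar_ball_center, ENNReal.mul_le_iff_le_inv hv0 hvT, ← mul_assoc] at h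
  calc eLpNorm' (fun w => f (y, w)) p volume
      = (∫⁻ w, ENNReal.ofReal (‖f (y, w)‖ ^ p)) ^ (1 / p) := by
        simp_rw [eLpNorm', ← ofReal_norm, ENNReal.ofReal_rpow_of_nonneg (norm_nonneg _) hp.le]
    _ ≤ (v⁻¹ * 2 ^ κ * Anorm κ p f ^ p) ^ (1 / p) := by gcongr
    _ = (v⁻¹ * 2 ^ κ) ^ (1 / p) * Anorm κ p f := by
        rw [ENNReal.mul_rpow_of_nonneg _ _ (by positivity), ← ENNReal.rpow_mul,
          mul_one_div_cancel hp.ne', ENNReal.rpow_one]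

end AnormSlice

section SquareIntegral

variable {α F : Type*} [MeasurableSpace α] {μ : Measure α} [NormedAddCommGroup F]

lemma integral_norm_sq_eq_lpNorm_sq {g : α → F} (hg : AEStronglyMeasurable g μ) :
    ∫ x, ‖g x‖ ^ 2 ∂μ = lpNorm g 2 μ ^ 2 := by
  have h := lpNorm_nnreal_eq_integral_norm_rpow (p := 2) two_ne_zero hg
  simp only [ENNReal.coe_ofNat, NNReal.coe_ofNat, Real.rpow_two] at h
  rw [h]
  simpa using (Real.rpow_inv_natCast_pow (n := 2)
    (integral_nonneg fun x => by positivity : 0 ≤ ∫ x, ‖g x‖ ^ 2 ∂μ) two_ne_zero).symm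

-- Only an inequality: the Bochner integral is `0` when `‖g‖²` is not integrable.
lemma enorm_integral_norm_sq_le {g : α → F} (hg : AEStronglyMeasurable g μ) :
    ‖∫ x, ‖g x‖ ^ 2 ∂μ‖ₑ ≤ eLpNorm g 2 μ ^ 2 := by
  rw [integral_norm_sq_eq_lpNorm_sq hg, ← toReal_eLpNorm hg, ← ENNReal.toReal_pow,
    Real.enorm_eq_ofReal ENNReal.toReal_nonneg]
  exact ENNReal.ofReal_toReal_le

lemma enorm_integral_norm_sq_sub_le {g₁ g₂ : α → F} (hg₁ : MemLp g₁ 2 μ) (hg₂ : MemLp g₂ 2 μ) :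
    ‖∫ x, ‖g₁ x‖ ^ 2 ∂μ - ∫ x, ‖g₂ x‖ ^ 2 ∂μ‖ₑ ≤
      (eLpNorm g₁ 2 μ + eLpNorm g₂ 2 μ) * eLpNorm (g₁ - g₂) 2 μ := by
  set a := lpNorm g₁ 2 μ
  set b := lpNorm g₂ 2 μ
  set c := lpNorm (g₁ - g₂) 2 μ
  have ha : 0 ≤ a := lpNorm_nonneg
  have hb : 0 ≤ b := lpNorm_nonneg
  have hab : a ≤ b + c := by simpa using lpNorm_le_lpNorm_add_lpNorm_sub' (f := g₁) hg₂ one_le_two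
  have hba : b ≤ a + c := by
    simpa [c, lpNorm_sub_comm g₁] using lpNorm_le_lpNorm_add_lpNorm_sub' (f := g₂) hg₁ one_le_two
  have hreal : |a ^ 2 - b ^ 2| ≤ (a + b) * c := by
    rw [show a ^ 2 - b ^ 2 = (a + b) * (a - b) by ring, abs_mul,
      abs_of_nonneg (by positivity : 0 ≤ a + b)]
    gcongr
    exact abs_sub_le_iff.mpr ⟨by linarith, by linarith⟩
  rw [integral_norm_sq_eq_lpNorm_sq hg₁.1, integral_norm_sq_eq_lpNorm_sq hg₂.1,
    Real.enorm_eq_ofReal_abs, ← ofReal_lpNorm hg₁, ← ofReal_lpNorm hg₂,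
    ← ofReal_lpNorm (hg₁.sub hg₂), ← ENNReal.ofReal_add lpNorm_nonneg lpNorm_nonneg,
    ← ENNReal.ofReal_mul (by positivity)]
  exact ENNReal.ofReal_le_ofReal hreal

lemma eLpNorm_two_rpow_two (g : α → F) :
    eLpNorm g 2 μ ^ (2 : ℝ) = ∫⁻ x, ‖g x‖ₑ ^ (2 : ℝ) ∂μ := by
  simpa using eLpNorm_nnreal_pow_eq_lintegral (f := g) (μ := μ) (p := 2) two_ne_zero

end SquareIntegral

section FibreL2

variable {α β F : Type*} [MeasurableSpace α] [MeasurableSpace β] {μ : Measure α}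
  {ν : Measure β} [SFinite ν] [NormedAddCommGroup F] [MeasurableSpace F] [BorelSpace F]

lemma measurable_eLpNorm_two_slice {f : α × β → F} (hf : Measurable f) :
    Measurable fun x => eLpNorm (fun y => f (x, y)) 2 ν := by
  have h : Measurable fun x => ∫⁻ y, ‖f (x, y)‖ₑ ^ (2 : ℝ) ∂ν :=
    (hf.enorm.pow_const _).lintegral_prod_right'
  convert h.pow_const (1 / 2 : ℝ) using 2 with x
  rw [← eLpNorm_two_rpow_two, ← ENNReal.rpow_mul]
  norm_num

lemma lintegral_eLpNorm_two_slice_mul_le {f g : α × β → F} (hf : Measurable f)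
    (hg : Measurable g) :
    ∫⁻ x, eLpNorm (fun y => f (x, y)) 2 ν * eLpNorm (fun y => g (x, y)) 2 ν ∂μ ≤
      eLpNorm f 2 (μ.prod ν) * eLpNorm g 2 (μ.prod ν) := by
  have hL2 : ∀ {f : α × β → F}, Measurable f →
      (∫⁻ x, eLpNorm (fun y => f (x, y)) 2 ν ^ (2 : ℝ) ∂μ) ^ (1 / (2 : ℝ)) =
        eLpNorm f 2 (μ.prod ν) := by
    intro f hf
    rw [eLpNorm_eq_lintegral_rpow_enorm_toReal two_ne_zero ENNReal.ofNat_ne_top,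
      ENNReal.toReal_ofNat, lintegral_prod _ (hf.enorm.pow_const _).aemeasurable]
    simp_rw [eLpNorm_two_rpow_two]
  calc _ ≤ (∫⁻ x, eLpNorm (fun y => f (x, y)) 2 ν ^ (2 : ℝ) ∂μ) ^ (1 / (2 : ℝ)) *
        (∫⁻ x, eLpNorm (fun y => g (x, y)) 2 ν ^ (2 : ℝ) ∂μ) ^ (1 / (2 : ℝ)) :=
        ENNReal.lintegral_mul_le_Lp_mul_Lq μ Real.HolderConjugate.two_two
          (measurable_eLpNorm_two_slice hf).aemeasurable
          (measurable_eLpNorm_two_slice hg).aemeasurable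
    _ = eLpNorm f 2 (μ.prod ν) * eLpNorm g 2 (μ.prod ν) := by rw [hL2 hf, hL2 hg]

end FibreL2

lemma setLIntegral_ball_norm_rpow_lt_top {V : Type*} [NormedAddCommGroup V] [NormedSpace ℝ V]
    [FiniteDimensional ℝ V] [MeasurableSpace V] [BorelSpace V] (μ : Measure V)
    [μ.IsAddHaarMeasure] (hV : 1 ≤ Module.finrank ℝ V) {s : ℝ}
    (hs : -(Module.finrank ℝ V : ℝ) < s) (r : ℝ) :
    ∫⁻ u in ball (0 : V) r, ENNReal.ofReal (‖u‖ ^ s) ∂μ < ⊤ := by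
  have hint : IntegrableOn (fun u : V => ‖u‖ ^ s) (ball 0 r) μ :=
    integrableOn_ball_of_norm_le_rpow (C := 1) (α := -s) hV (by linarith)
      (ae_of_all _ fun u => by simp [abs_of_nonneg (Real.rpow_nonneg (norm_nonneg u) s)])
      (measurable_norm.pow_const s).aestronglyMeasurable
  simpa only [hasFiniteIntegral_iff_ofReal (ae_of_all _ fun u => Real.rpow_nonneg
    (norm_nonneg u) s)] using hint.2

section Newton

variable {d : ℕ}

lemma measurable_gradNewton : Measurable (gradNewton d) := by
  unfold gradNewton
  fun_prop

lemma norm_gradNewton_le (u : E d) :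
    ‖gradNewton d u‖ ≤
      ((d : ℝ) * (volume (ball (0 : E d) 1)).toReal)⁻¹ * ‖u‖ ^ ((1 : ℝ) - d) := by
  rcases eq_or_ne u 0 with rfl | hu
  · simp only [gradNewton, smul_zero, norm_zero]
    positivity
  have hu' : 0 < ‖u‖ := norm_pos_iff.mpr hu
  rw [gradNewton, norm_smul, Real.norm_of_nonneg (by positivity), mul_inv,
    Real.rpow_sub hu', Real.rpow_one, div_eq_mul_inv, mul_assoc, mul_comm ‖u‖]

lemma lintegral_enorm_smul_gradNewton_le (hd : 1 ≤ d) {ρ : E d → ℝ}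
    (hρ : AEStronglyMeasurable ρ) (x : E d) :
    ∫⁻ y, ‖ρ y • gradNewton d (x - y)‖ₑ ≤
      ENNReal.ofReal ((d : ℝ) * (volume (ball (0 : E d) 1)).toReal)⁻¹ *
        (eLpNorm ρ ⊤ volume * (∫⁻ u in ball (0 : E d) 1, ENNReal.ofReal (‖u‖ ^ ((1 : ℝ) - d))) +
          eLpNorm ρ 1 volume) := by
  set c := ENNReal.ofReal ((d : ℝ) * (volume (ball (0 : E d) 1)).toReal)⁻¹
  set k := (ball (0 : E d) 1).indicator fun u => ENNReal.ofReal (‖u‖ ^ ((1 : ℝ) - d))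
  have hk : Measurable k :=
    (measurable_norm.pow_const _).ennreal_ofReal.indicator measurableSet_ball
  have hkernel : ∀ u, ‖gradNewton d u‖ₑ ≤ c * (k u + 1) := by
    intro u
    rw [← ofReal_norm]
    calc ENNReal.ofReal ‖gradNewton d u‖
        ≤ c * ENNReal.ofReal (‖u‖ ^ ((1 : ℝ) - d)) := by
          rw [← ENNReal.ofReal_mul (by positivity)]
          exact ENNReal.ofReal_le_ofReal (norm_gradNewton_le u)
      _ ≤ c * (k u + 1) := by
          gcongr
          by_cases hu : u ∈ ball (0 : E d) 1
          · simp [k, hu]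
          · simp only [k, Set.indicator_of_notMem hu, zero_add, ENNReal.ofReal_le_one]
            refine Real.rpow_le_one_of_one_le_of_nonpos (by simpa using hu) ?_
            linarith [(Nat.one_le_cast.mpr hd : (1 : ℝ) ≤ d)]
  rw [eLpNorm_exponent_top, eLpNormEssSup, eLpNorm_one_eq_lintegral_enorm]
  simp_rw [enorm_smul]
  calc ∫⁻ y, ‖ρ y‖ₑ * ‖gradNewton d (x - y)‖ₑ
      ≤ ∫⁻ y, c * (‖ρ y‖ₑ * k (x - y) + ‖ρ y‖ₑ) :=
        lintegral_mono fun y => (mul_le_mul_of_nonneg_left (hkernel _) zero_le).trans_eq (by ring)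
    _ = c * ((∫⁻ y, ‖ρ y‖ₑ * k (x - y)) + ∫⁻ y, ‖ρ y‖ₑ) := by
        rw [lintegral_const_mul' _ _ ENNReal.ofReal_ne_top,
          lintegral_add_right' _ hρ.enorm]
    _ ≤ c * (essSup (‖ρ ·‖ₑ) volume *
          (∫⁻ u in ball (0 : E d) 1, ENNReal.ofReal (‖u‖ ^ ((1 : ℝ) - d))) + ∫⁻ y, ‖ρ y‖ₑ) := by
        gcongr
        calc ∫⁻ y, ‖ρ y‖ₑ * k (x - y) ≤ ∫⁻ y, essSup (‖ρ ·‖ₑ) volume * k (x - y) :=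
              lintegral_mono_ae <| (ENNReal.ae_le_essSup (‖ρ ·‖ₑ)).mono fun y hy => by gcongr
          _ = _ := by
              rw [lintegral_const_mul _ (by fun_prop : Measurable fun y => k (x - y)),
                lintegral_sub_left_eq_self k x, lintegral_indicator measurableSet_ball]

lemma setLIntegral_ball_norm_rpow_one_sub_lt_top (hd : 1 ≤ d) :
    ∫⁻ u in ball (0 : E d) 1, ENNReal.ofReal (‖u‖ ^ ((1 : ℝ) - d)) < ⊤ :=
  setLIntegral_ball_norm_rpow_lt_top volume (by simpa using hd) (by simp) 1

lemma integrable_smul_gradNewton (hd : 1 ≤ d) {ρ : E d → ℝ} (hρ₁ : MemLp ρ 1)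
    (hρ_top : MemLp ρ ⊤) (x : E d) :
    Integrable fun y => ρ y • gradNewton d (x - y) := by
  refine ⟨hρ₁.1.smul (measurable_gradNewton.comp (measurable_const_sub x)).aestronglyMeasurable,
    (lintegral_enorm_smul_gradNewton_le hd hρ₁.1 x).trans_lt ?_⟩
  have := setLIntegral_ball_norm_rpow_one_sub_lt_top hd
  have := hρ₁.2
  have := hρ_top.2
  finiteness

end Newton

noncomputable def newtonForce (d : ℕ) (ρ : E d → ℝ) (x : E d) : E d :=
  -∫ y, ρ y • gradNewton d (x - y)

lemma enorm_newtonForce_sub_le {d : ℕ} (hd : 1 ≤ d) {ρ₁ ρ₂ : E d → ℝ} (hρ₁ : MemLp ρ₁ 1)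
    (hρ₁_top : MemLp ρ₁ ⊤) (hρ₂ : MemLp ρ₂ 1) (hρ₂_top : MemLp ρ₂ ⊤) (x : E d) :
    ‖newtonForce d ρ₁ x - newtonForce d ρ₂ x‖ₑ ≤
      ENNReal.ofReal ((d : ℝ) * (volume (ball (0 : E d) 1)).toReal)⁻¹ *
        (eLpNorm (ρ₁ - ρ₂) ⊤ volume *
          (∫⁻ u in ball (0 : E d) 1, ENNReal.ofReal (‖u‖ ^ ((1 : ℝ) - d))) +
          eLpNorm (ρ₁ - ρ₂) 1 volume) := by
  rw [newtonForce, newtonForce, neg_sub_neg, enorm_sub_rev,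
    ← integral_sub (integrable_smul_gradNewton hd hρ₁ hρ₁_top x)
      (integrable_smul_gradNewton hd hρ₂ hρ₂_top x)]
  simp_rw [← sub_smul]
  exact (enorm_integral_le_lintegral_enorm _).trans
    (lintegral_enorm_smul_gradNewton_le hd (hρ₁.1.sub hρ₂.1) x)

noncomputable def spatialDensity {α β F : Type*} [MeasureSpace β] [NormedAddCommGroup F]
    (f : α × β → F) (y : α) : ℝ :=
  ∫ w, ‖f (y, w)‖ ^ 2

lemma measurable_spatialDensity {α β F : Type*} [MeasurableSpace α] [MeasureSpace β]
    [SFinite (volume : Measure β)] [NormedAddCommGroup F] [MeasurableSpace F] [BorelSpace F]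
    {f : α × β → F} (hf : Measurable f) : Measurable (spatialDensity f) :=
  (hf.norm.pow_const 2).stronglyMeasurable.integral_prod_right'.measurable

section SpatialDensity

variable {G₁ G₂ F : Type*} [NormedAddCommGroup G₁] [MeasureSpace G₁]
  [NormedAddCommGroup G₂] [MeasureSpace G₂] [SFinite (volume : Measure G₂)]
  [NormedAddCommGroup F] [MeasurableSpace F] [BorelSpace F] {κ : ℝ}

lemma lintegral_eLpNorm_two_slice_mul_le_Anorm {f g : G₁ × G₂ → F} (hf : Measurable f)
    (hg : Measurable g) :
    ∫⁻ y, eLpNorm (fun w => f (y, w)) 2 volume * eLpNorm (fun w => g (y, w)) 2 volume ≤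
      Anorm κ 2 f * Anorm κ 2 g := by
  refine (lintegral_eLpNorm_two_slice_mul_le hf hg).trans ?_
  rw [← Measure.volume_eq_prod]
  gcongr <;> exact eLpNorm_two_le_Anorm _

lemma memLp_one_spatialDensity [SecondCountableTopology F] {f : G₁ × G₂ → F}
    (hf : Measurable f) (hA : Anorm κ 2 f ≠ ⊤) :
    MemLp (spatialDensity f) 1 volume := by
  refine ⟨(measurable_spatialDensity hf).aestronglyMeasurable, ?_⟩
  rw [eLpNorm_one_eq_lintegral_enorm]
  calc ∫⁻ y, ‖spatialDensity f y‖ₑ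
      ≤ ∫⁻ y, eLpNorm (fun w => f (y, w)) 2 volume * eLpNorm (fun w => f (y, w)) 2 volume :=
        lintegral_mono fun y => (enorm_integral_norm_sq_le
          (hf.comp measurable_prodMk_left).aestronglyMeasurable).trans_eq (sq _)
    _ ≤ Anorm κ 2 f * Anorm κ 2 f := lintegral_eLpNorm_two_slice_mul_le_Anorm hf hf
    _ < ⊤ := by finiteness

variable [NormedSpace ℝ G₁] [FiniteDimensional ℝ G₁] [BorelSpace G₁]
  [(volume : Measure G₁).IsAddHaarMeasure]

lemma eLpNorm_two_slice_le_Anorm {f : G₁ × G₂ → F} (hf : Measurable f) (y : G₁) :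
    eLpNorm (fun w => f (y, w)) 2 volume ≤
      ((volume (ball (0 : G₁) 1))⁻¹ * 2 ^ κ) ^ (1 / (2 : ℝ)) * Anorm κ 2 f := by
  rw [eLpNorm_eq_eLpNorm' two_ne_zero ENNReal.ofNat_ne_top, ENNReal.toReal_ofNat]
  exact eLpNorm'_slice_le_Anorm two_pos hf y

variable [SecondCountableTopology F]

lemma memLp_two_slice {f : G₁ × G₂ → F} (hf : Measurable f) (hA : Anorm κ 2 f ≠ ⊤) (y : G₁) :
    MemLp (fun w => f (y, w)) 2 volume := by
  refine ⟨(hf.comp measurable_prodMk_left).aestronglyMeasurable,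
    (eLpNorm_two_slice_le_Anorm (κ := κ) hf y).trans_lt ?_⟩
  have : volume (ball (0 : G₁) 1) ≠ 0 := (measure_ball_pos volume _ one_pos).ne'
  finiteness

lemma memLp_top_spatialDensity {f : G₁ × G₂ → F} (hf : Measurable f) (hA : Anorm κ 2 f ≠ ⊤) :
    MemLp (spatialDensity f) ⊤ volume := by
  refine ⟨(measurable_spatialDensity hf).aestronglyMeasurable, ?_⟩
  rw [eLpNorm_exponent_top]
  refine (eLpNormEssSup_le_of_ae_enorm_bound (ae_of_all _ fun y =>
    (enorm_integral_norm_sq_le (hf.comp measurable_prodMk_left).aestronglyMeasurable).trans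
      (pow_le_pow_left' (eLpNorm_two_slice_le_Anorm (κ := κ) hf y) 2))).trans_lt ?_
  have : volume (ball (0 : G₁) 1) ≠ 0 := (measure_ball_pos volume _ one_pos).ne'
  finiteness

lemma enorm_spatialDensity_sub_le {f₁ f₂ : G₁ × G₂ → F} (hf₁ : Measurable f₁)
    (hf₂ : Measurable f₂) (hA₁ : Anorm κ 2 f₁ ≠ ⊤) (hA₂ : Anorm κ 2 f₂ ≠ ⊤) (y : G₁) :
    ‖spatialDensity f₁ y - spatialDensity f₂ y‖ₑ ≤
      (eLpNorm (fun w => f₁ (y, w)) 2 volume + eLpNorm (fun w => f₂ (y, w)) 2 volume) *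
        eLpNorm (fun w => (f₁ - f₂) (y, w)) 2 volume :=
  enorm_integral_norm_sq_sub_le (memLp_two_slice hf₁ hA₁ y) (memLp_two_slice hf₂ hA₂ y)

lemma eLpNorm_top_spatialDensity_sub_le {f₁ f₂ : G₁ × G₂ → F} (hf₁ : Measurable f₁)
    (hf₂ : Measurable f₂) (hA₁ : Anorm κ 2 f₁ ≠ ⊤) (hA₂ : Anorm κ 2 f₂ ≠ ⊤) :
    eLpNorm (spatialDensity f₁ - spatialDensity f₂) ⊤ volume ≤
      (volume (ball (0 : G₁) 1))⁻¹ * 2 ^ κ *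
        ((Anorm κ 2 f₁ + Anorm κ 2 f₂) * Anorm κ 2 (f₁ - f₂)) := by
  set M := ((volume (ball (0 : G₁) 1))⁻¹ * 2 ^ κ) ^ (1 / (2 : ℝ))
  have hM : M * M = (volume (ball (0 : G₁) 1))⁻¹ * 2 ^ κ := by
    rw [← ENNReal.rpow_add_of_nonneg _ _ (by norm_num) (by norm_num)]
    norm_num
  rw [eLpNorm_exponent_top]
  refine eLpNormEssSup_le_of_ae_enorm_bound (ae_of_all _ fun y => ?_)
  calc ‖(spatialDensity f₁ - spatialDensity f₂) y‖ₑ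
      ≤ (eLpNorm (fun w => f₁ (y, w)) 2 volume + eLpNorm (fun w => f₂ (y, w)) 2 volume) *
        eLpNorm (fun w => (f₁ - f₂) (y, w)) 2 volume :=
        enorm_spatialDensity_sub_le hf₁ hf₂ hA₁ hA₂ y
    _ ≤ (M * Anorm κ 2 f₁ + M * Anorm κ 2 f₂) * (M * Anorm κ 2 (f₁ - f₂)) := by
        gcongr <;> apply eLpNorm_two_slice_le_Anorm
        exacts [hf₁, hf₂, hf₁.sub hf₂]
    _ = M * M * ((Anorm κ 2 f₁ + Anorm κ 2 f₂) * Anorm κ 2 (f₁ - f₂)) := by ring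
    _ = _ := by rw [hM]

lemma eLpNorm_one_spatialDensity_sub_le {f₁ f₂ : G₁ × G₂ → F} (hf₁ : Measurable f₁)
    (hf₂ : Measurable f₂) (hA₁ : Anorm κ 2 f₁ ≠ ⊤) (hA₂ : Anorm κ 2 f₂ ≠ ⊤) :
    eLpNorm (spatialDensity f₁ - spatialDensity f₂) 1 volume ≤
      (Anorm κ 2 f₁ + Anorm κ 2 f₂) * Anorm κ 2 (f₁ - f₂) := by
  rw [eLpNorm_one_eq_lintegral_enorm]
  calc ∫⁻ y, ‖(spatialDensity f₁ - spatialDensity f₂) y‖ₑ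
      ≤ ∫⁻ y, eLpNorm (fun w => f₁ (y, w)) 2 volume *
            eLpNorm (fun w => (f₁ - f₂) (y, w)) 2 volume +
          eLpNorm (fun w => f₂ (y, w)) 2 volume *
            eLpNorm (fun w => (f₁ - f₂) (y, w)) 2 volume :=
        lintegral_mono fun y => (enorm_spatialDensity_sub_le hf₁ hf₂ hA₁ hA₂ y).trans_eq
          (add_mul _ _ _)
    _ = (∫⁻ y, eLpNorm (fun w => f₁ (y, w)) 2 volume *
            eLpNorm (fun w => (f₁ - f₂) (y, w)) 2 volume) +
          ∫⁻ y, eLpNorm (fun w => f₂ (y, w)) 2 volume *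
            eLpNorm (fun w => (f₁ - f₂) (y, w)) 2 volume :=
        lintegral_add_left ((measurable_eLpNorm_two_slice hf₁).mul
          (measurable_eLpNorm_two_slice (hf₁.sub hf₂))) _
    _ ≤ Anorm κ 2 f₁ * Anorm κ 2 (f₁ - f₂) + Anorm κ 2 f₂ * Anorm κ 2 (f₁ - f₂) :=
        add_le_add (lintegral_eLpNorm_two_slice_mul_le_Anorm hf₁ (hf₁.sub hf₂))
          (lintegral_eLpNorm_two_slice_mul_le_Anorm hf₂ (hf₁.sub hf₂))
    _ = _ := (add_mul _ _ _).symm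

end SpatialDensity

theorem statement14_general (d : ℕ) (hd : 3 ≤ d) (κ : ℝ) :
    ∃ C > 0, ∀ α₁ α₂ : E d × E d → ℂ, Measurable α₁ → Measurable α₂ →
      Anorm κ 2 α₁ < ⊤ → Anorm κ 2 α₂ < ⊤ → ∀ x : E d,
      ENNReal.ofReal
          ‖(-∫ y : E d, (∫ w : E d, ‖α₁ (y, w)‖ ^ 2) • gradNewton d (x - y)) -
            (-∫ y : E d, (∫ w : E d, ‖α₂ (y, w)‖ ^ 2) • gradNewton d (x - y))‖ ≤
        ENNReal.ofReal C * (Anorm κ 2 α₁ + Anorm κ 2 α₂) * Anorm κ 2 (α₁ - α₂) := by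
  have hd₁ : 1 ≤ d := by omega
  set c := ENNReal.ofReal ((d : ℝ) * (volume (ball (0 : E d) 1)).toReal)⁻¹
  set N := ∫⁻ u in ball (0 : E d) 1, ENNReal.ofReal (‖u‖ ^ ((1 : ℝ) - d))
  set K := (volume (ball (0 : E d) 1))⁻¹ * 2 ^ κ
  have hC : c * (K * N + 1) ≠ ⊤ := by
    have := setLIntegral_ball_norm_rpow_one_sub_lt_top hd₁
    have : volume (ball (0 : E d) 1) ≠ 0 := (measure_ball_pos volume _ one_pos).ne'
    finiteness
  refine ⟨(c * (K * N + 1)).toReal + 1, by positivity, fun α₁ α₂ hm₁ hm₂ hA₁ hA₂ x => ?_⟩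
  set A := (Anorm κ 2 α₁ + Anorm κ 2 α₂) * Anorm κ 2 (α₁ - α₂)
  rw [ofReal_norm, mul_assoc]
  calc _ ≤ c * (eLpNorm (spatialDensity α₁ - spatialDensity α₂) ⊤ volume * N +
          eLpNorm (spatialDensity α₁ - spatialDensity α₂) 1 volume) :=
        enorm_newtonForce_sub_le hd₁ (memLp_one_spatialDensity hm₁ hA₁.ne)
          (memLp_top_spatialDensity hm₁ hA₁.ne) (memLp_one_spatialDensity hm₂ hA₂.ne)
          (memLp_top_spatialDensity hm₂ hA₂.ne) x
    _ ≤ c * (K * A * N + A) := by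
        gcongr
        exacts [eLpNorm_top_spatialDensity_sub_le hm₁ hm₂ hA₁.ne hA₂.ne,
          eLpNorm_one_spatialDensity_sub_le hm₁ hm₂ hA₁.ne hA₂.ne]
    _ = c * (K * N + 1) * A := by ring
    _ ≤ ENNReal.ofReal ((c * (K * N + 1)).toReal + 1) * A := by
        gcongr
        exact (ENNReal.le_ofReal_iff_toReal_le hC (by positivity)).mpr (by linarith)

/-- Lipschitz estimate for the force `F_i = −∇Γ * ρ_i`: there is `C = C(d,κ) > 0` with
`‖F₁ − F₂‖_{L^∞} ≤ C (‖α₁‖_{A^{κ,2}} + ‖α₂‖_{A^{κ,2}}) ‖α₁ − α₂‖_{A^{κ,2}}`. -/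
theorem statement14 (d : ℕ) (hd : 3 ≤ d) (κ : ℝ) (hκ : 2 * (d : ℝ) ≤ κ) :
    ∃ C > 0, ∀ α₁ α₂ : E d × E d → ℂ, Measurable α₁ → Measurable α₂ →
      Anorm κ 2 α₁ < ⊤ → Anorm κ 2 α₂ < ⊤ → ∀ x : E d,
      ENNReal.ofReal
          ‖(-∫ y : E d, (∫ w : E d, ‖α₁ (y, w)‖ ^ 2) • gradNewton d (x - y)) -
            (-∫ y : E d, (∫ w : E d, ‖α₂ (y, w)‖ ^ 2) • gradNewton d (x - y))‖ ≤
        ENNReal.ofReal C * (Anorm κ 2 α₁ + Anorm κ 2 α₂) * Anorm κ 2 (α₁ - α₂) :=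
  statement14_general d hd κ
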